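/- For the soft-thresholding pivot summand: let ε ~ N(0,1), ν ∈ ℝ, τ > 0, a = ν − τ, b = ν + τ, I = 1{a < ε < b}, I⁺ = 1{ε > b}, I⁻ = 1{ε < a}, and Z = (ε² − 1)(1 − 2I) + 2νεI − 2τε(I⁺ − I⁻). Then E[Z] = 0 and E[Z²] = 2[1 + 2τ² + 2ab(Φ(b) − Φ(a)) + 2aφ(b) − 2bφ(a)]. -/

import Mathlib

/-!
On each of the regions `ε < a`, `a < ε < b`, `b < ε` the summand `Z` and its square are
polynomials in `ε`, and every polynomial `q` can be written as `q = c + p' - X p` with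
`c = E[q(ε)]`. Since `(p φ)' = (p' - X p) φ`, the integral of `q φ` over an interval is `c` times the Gaussian
mass of the interval plus the boundary terms `p φ`. Adding the three regions, the mass terms give
the stated combination of `Φ(a), Φ(b)` and the boundary terms those of `φ(a), φ(b)`.
-/

open MeasureTheory ProbabilityTheory Real Filter Set Polynomial

noncomputable def gaussPdf (x : ℝ) : ℝ := (Real.sqrt (2 * Real.pi))⁻¹ * Real.exp (-x ^ 2 / 2)

noncomputable def gaussCdf (x : ℝ) : ℝ := ∫ t in Set.Iic x, gaussPdf t

lemma gaussianPDFReal_zero_one : gaussianPDFReal 0 1 = gaussPdf := by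
  ext x
  simp [gaussianPDFReal, gaussPdf]

lemma integral_gaussianReal_zero_one (f : ℝ → ℝ) :
    ∫ x, f x ∂gaussianReal 0 1 = ∫ x, f x * gaussPdf x := by
  simp [integral_gaussianReal_eq_integral_smul one_ne_zero, gaussianPDFReal_zero_one, mul_comm]

lemma integrable_gaussPdf : Integrable gaussPdf :=
  gaussianPDFReal_zero_one ▸ integrable_gaussianPDFReal 0 1

lemma integral_gaussPdf : ∫ x, gaussPdf x = 1 :=
  gaussianPDFReal_zero_one ▸ integral_gaussianPDFReal_eq_one 0 one_ne_zero

lemma hasDerivAt_gaussPdf (x : ℝ) : HasDerivAt gaussPdf (-x * gaussPdf x) x := by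
  have h : HasDerivAt (fun y : ℝ ↦ -y ^ 2 / 2) (-x) x :=
    ((hasDerivAt_pow 2 x).neg.div_const 2).congr_deriv (by ring)
  exact (h.exp.const_mul _).congr_deriv (by rw [gaussPdf]; ring)

lemma integrable_pow_mul_gaussPdf (n : ℕ) : Integrable fun x ↦ x ^ n * gaussPdf x := by
  have h := (integrable_rpow_mul_exp_neg_mul_sq (b := 1 / 2) (by norm_num)
    (by linarith [n.cast_nonneg (α := ℝ)] : (-1 : ℝ) < n)).const_mul (√(2 * π))⁻¹
  refine h.congr (ae_of_all _ fun x ↦ ?_)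
  simp only [gaussPdf, rpow_natCast, show -x ^ 2 / 2 = -(1 / 2) * x ^ 2 by ring]
  ring

lemma integrable_eval_mul_gaussPdf (p : ℝ[X]) : Integrable fun x ↦ p.eval x * gaussPdf x := by
  induction p using Polynomial.induction_on' with
  | add p q hp hq =>
    simp only [eval_add, add_mul]
    exact hp.add hq
  | monomial n c => simpa [mul_assoc] using (integrable_pow_mul_gaussPdf n).const_mul c

lemma integral_Iio_gaussPdf (t : ℝ) : ∫ x in Iio t, gaussPdf x = gaussCdf t :=
  integral_Iic_eq_integral_Iio.symm

lemma integral_Ioi_gaussPdf (t : ℝ) : ∫ x in Ioi t, gaussPdf x = 1 - gaussCdf t := by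
  rw [← integral_gaussPdf, ← intervalIntegral.integral_Iic_add_Ioi integrable_gaussPdf.integrableOn
    integrable_gaussPdf.integrableOn, gaussCdf, add_sub_cancel_left]

lemma integral_Ioo_gaussPdf {s t : ℝ} (hst : s ≤ t) :
    ∫ x in Ioo s t, gaussPdf x = gaussCdf t - gaussCdf s := by
  rw [gaussCdf, gaussCdf, intervalIntegral.integral_Iic_sub_Iic integrable_gaussPdf.integrableOn
    integrable_gaussPdf.integrableOn, intervalIntegral.integral_of_le hst,
    integral_Ioc_eq_integral_Ioo]

/-- The Stein operator of the standard normal law, `p ↦ p' - X p`. -/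
noncomputable def steinOp (p : ℝ[X]) : ℝ[X] := derivative p - X * p

lemma hasDerivAt_eval_mul_gaussPdf (p : ℝ[X]) (x : ℝ) :
    HasDerivAt (fun y ↦ p.eval y * gaussPdf y) ((steinOp p).eval x * gaussPdf x) x :=
  ((p.hasDerivAt x).mul (hasDerivAt_gaussPdf x)).congr_deriv (by
    rw [steinOp, eval_sub, eval_mul, eval_X]; ring)

lemma tendsto_eval_mul_gaussPdf_atTop (p : ℝ[X]) :
    Tendsto (fun x ↦ p.eval x * gaussPdf x) atTop (nhds 0) :=
  tendsto_zero_of_hasDerivAt_of_integrableOn_Ioi (a := 0)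
    (fun x _ ↦ hasDerivAt_eval_mul_gaussPdf p x)
    (integrable_eval_mul_gaussPdf _).integrableOn (integrable_eval_mul_gaussPdf _).integrableOn

lemma tendsto_eval_mul_gaussPdf_atBot (p : ℝ[X]) :
    Tendsto (fun x ↦ p.eval x * gaussPdf x) atBot (nhds 0) :=
  tendsto_zero_of_hasDerivAt_of_integrableOn_Iic (a := 0)
    (fun x _ ↦ hasDerivAt_eval_mul_gaussPdf p x)
    (integrable_eval_mul_gaussPdf _).integrableOn (integrable_eval_mul_gaussPdf _).integrableOn

lemma integral_Iio_steinOp (p : ℝ[X]) (t : ℝ) :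
    ∫ x in Iio t, (steinOp p).eval x * gaussPdf x = p.eval t * gaussPdf t := by
  rw [← integral_Iic_eq_integral_Iio, integral_Iic_of_hasDerivAt_of_tendsto'
    (fun x _ ↦ hasDerivAt_eval_mul_gaussPdf p x) (integrable_eval_mul_gaussPdf _).integrableOn
    (tendsto_eval_mul_gaussPdf_atBot p), sub_zero]

lemma integral_Ioi_steinOp (p : ℝ[X]) (t : ℝ) :
    ∫ x in Ioi t, (steinOp p).eval x * gaussPdf x = -(p.eval t * gaussPdf t) := by
  rw [integral_Ioi_of_hasDerivAt_of_tendsto'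
    (fun x _ ↦ hasDerivAt_eval_mul_gaussPdf p x) (integrable_eval_mul_gaussPdf _).integrableOn
    (tendsto_eval_mul_gaussPdf_atTop p), zero_sub]

lemma integral_Ioo_steinOp (p : ℝ[X]) {s t : ℝ} (hst : s ≤ t) :
    ∫ x in Ioo s t, (steinOp p).eval x * gaussPdf x
      = p.eval t * gaussPdf t - p.eval s * gaussPdf s := by
  rw [← integral_Ioc_eq_integral_Ioo, ← intervalIntegral.integral_of_le hst,
    intervalIntegral.integral_eq_sub_of_hasDerivAt (fun x _ ↦ hasDerivAt_eval_mul_gaussPdf p x)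
      (integrable_eval_mul_gaussPdf _).intervalIntegrable]

lemma integral_eq_Iio_add_Ioo_add_Ioi {E : Type*} [NormedAddCommGroup E] [NormedSpace ℝ E]
    {g : ℝ → E} {a b : ℝ} (hab : a ≤ b) (h₁ : IntegrableOn g (Iio a))
    (h₂ : IntegrableOn g (Ioo a b)) (h₃ : IntegrableOn g (Ioi b)) :
    ∫ x, g x = (∫ x in Iio a, g x) + (∫ x in Ioo a b, g x) + ∫ x in Ioi b, g x := by
  have hIoc : IntegrableOn g (Ioc a b) := (integrableOn_Ioc_iff_integrableOn_Ioo (f := g)).mpr h₂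
  have hIic : IntegrableOn g (Iic a) := (integrableOn_Iic_iff_integrableOn_Iio (f := g)).mpr h₁
  rw [← intervalIntegral.integral_Iic_add_Ioi hIic (Ioc_union_Ioi_eq_Ioi hab ▸ hIoc.union h₃),
    ← Ioc_union_Ioi_eq_Ioi hab,
    setIntegral_union (Ioc_disjoint_Ioi le_rfl) measurableSet_Ioi hIoc h₃,
    integral_Iic_eq_integral_Iio, integral_Ioc_eq_integral_Ioo, add_assoc]

lemma integrableOn_mul_gaussPdf_of_eqOn {f : ℝ → ℝ} {s : Set ℝ} (hs : MeasurableSet s)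
    {q : ℝ[X]} (h : EqOn f (fun x ↦ q.eval x) s) :
    IntegrableOn (fun x ↦ f x * gaussPdf x) s :=
  (integrable_eval_mul_gaussPdf q).integrableOn.congr_fun
    (fun x hx ↦ by simp only [h hx]) hs

lemma setIntegral_mul_gaussPdf_of_eqOn {f : ℝ → ℝ} {s : Set ℝ} (hs : MeasurableSet s)
    {c : ℝ} {p : ℝ[X]} (h : EqOn f (fun x ↦ c + (steinOp p).eval x) s) :
    ∫ x in s, f x * gaussPdf x
      = c * (∫ x in s, gaussPdf x) + ∫ x in s, (steinOp p).eval x * gaussPdf x := by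
  rw [setIntegral_congr_fun (g := fun x ↦ c * gaussPdf x + (steinOp p).eval x * gaussPdf x) hs
      fun x hx ↦ by simp only [h hx, add_mul],
    integral_add (integrable_gaussPdf.const_mul c).integrableOn
      (integrable_eval_mul_gaussPdf _).integrableOn, integral_const_mul]

theorem integral_gaussianReal_of_eqOn_steinOp {f : ℝ → ℝ} {a b : ℝ} (hab : a ≤ b)
    {c₁ c₂ c₃ : ℝ} {p₁ p₂ p₃ : ℝ[X]}
    (h₁ : EqOn f (fun x ↦ c₁ + (steinOp p₁).eval x) (Iio a))
    (h₂ : EqOn f (fun x ↦ c₂ + (steinOp p₂).eval x) (Ioo a b))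
    (h₃ : EqOn f (fun x ↦ c₃ + (steinOp p₃).eval x) (Ioi b)) :
    ∫ x, f x ∂gaussianReal 0 1
      = c₁ * gaussCdf a + c₂ * (gaussCdf b - gaussCdf a) + c₃ * (1 - gaussCdf b)
        + (p₁.eval a - p₂.eval a) * gaussPdf a + (p₂.eval b - p₃.eval b) * gaussPdf b := by
  have hq : ∀ (c : ℝ) (p : ℝ[X]) (x : ℝ), c + (steinOp p).eval x = (C c + steinOp p).eval x :=
    fun c p x ↦ by rw [eval_add, eval_C]
  rw [integral_gaussianReal_zero_one, integral_eq_Iio_add_Ioo_add_Ioi hab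
    (integrableOn_mul_gaussPdf_of_eqOn measurableSet_Iio fun x hx ↦ (h₁ hx).trans (hq _ _ x))
    (integrableOn_mul_gaussPdf_of_eqOn measurableSet_Ioo fun x hx ↦ (h₂ hx).trans (hq _ _ x))
    (integrableOn_mul_gaussPdf_of_eqOn measurableSet_Ioi fun x hx ↦ (h₃ hx).trans (hq _ _ x)),
    setIntegral_mul_gaussPdf_of_eqOn measurableSet_Iio h₁,
    setIntegral_mul_gaussPdf_of_eqOn measurableSet_Ioo h₂,
    setIntegral_mul_gaussPdf_of_eqOn measurableSet_Ioi h₃,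
    integral_Iio_gaussPdf, integral_Ioo_gaussPdf hab, integral_Ioi_gaussPdf,
    integral_Iio_steinOp, integral_Ioo_steinOp _ hab, integral_Ioi_steinOp]
  ring

lemma Cubic.eval_toPoly {R : Type*} [CommSemiring R] (P : Cubic R) (x : R) :
    P.toPoly.eval x = P.a * x ^ 3 + P.b * x ^ 2 + P.c * x + P.d := by
  simp only [Cubic.toPoly, eval_add, eval_mul, eval_C, eval_pow, eval_X]

lemma eval_steinOp_toPoly (P : Cubic ℝ) (x : ℝ) :
    (steinOp P.toPoly).eval x = 3 * P.a * x ^ 2 + 2 * P.b * x + P.c - x * P.toPoly.eval x := by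
  simp only [steinOp, Cubic.toPoly, derivative_add, derivative_C_mul_X_pow, derivative_C_mul_X,
    derivative_C, eval_zero, eval_sub, eval_add, eval_mul, eval_C, eval_pow, eval_X]
  ring

theorem stmt14 (ν τ : ℝ) (hτ : 0 < τ) :
    let a : ℝ := ν - τ
    let b : ℝ := ν + τ
    let Z : ℝ → ℝ := fun ε =>
      (ε ^ 2 - 1) * (1 - 2 * (if a < ε ∧ ε < b then (1 : ℝ) else 0))
        + 2 * ν * ε * (if a < ε ∧ ε < b then (1 : ℝ) else 0)
        - 2 * τ * ε * ((if b < ε then (1 : ℝ) else 0) - (if ε < a then (1 : ℝ) else 0))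
    (∫ ε, Z ε ∂(gaussianReal 0 1)) = 0
    ∧ (∫ ε, Z ε ^ 2 ∂(gaussianReal 0 1))
        = 2 * (1 + 2 * τ ^ 2 + 2 * a * b * (gaussCdf b - gaussCdf a)
            + 2 * a * gaussPdf b - 2 * b * gaussPdf a) := by
  intro a b Z
  have hab : a ≤ b := by simp only [a, b]; linarith
  have hZ₁ : ∀ x < a, Z x = x ^ 2 - 1 + 2 * τ * x := fun x hx ↦ by
    simp only [Z, if_pos hx, if_neg (show ¬b < x by linarith),
      if_neg (show ¬(a < x ∧ x < b) from fun h ↦ by linarith [h.1])]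
    ring
  have hZ₂ : ∀ x ∈ Ioo a b, Z x = 1 - x ^ 2 + 2 * ν * x := fun x hx ↦ by
    simp only [Z, if_pos (show a < x ∧ x < b from hx), if_neg (show ¬b < x by linarith [hx.2]),
      if_neg (show ¬x < a by linarith [hx.1])]
    ring
  have hZ₃ : ∀ x, b < x → Z x = x ^ 2 - 1 - 2 * τ * x := fun x hx ↦ by
    simp only [Z, if_pos hx, if_neg (show ¬x < a by linarith),
      if_neg (show ¬(a < x ∧ x < b) from fun h ↦ by linarith [h.2])]
    ring
  constructor
  · rw [integral_gaussianReal_of_eqOn_steinOp hab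
      (c₁ := 0) (p₁ := Cubic.toPoly ⟨0, 0, -1, -2 * τ⟩)
      (c₂ := 0) (p₂ := Cubic.toPoly ⟨0, 0, 1, -2 * ν⟩)
      (c₃ := 0) (p₃ := Cubic.toPoly ⟨0, 0, -1, 2 * τ⟩)
      (fun x hx ↦ by simp only [hZ₁ x hx, eval_steinOp_toPoly, Cubic.eval_toPoly]; ring)
      (fun x hx ↦ by simp only [hZ₂ x hx, eval_steinOp_toPoly, Cubic.eval_toPoly]; ring)
      (fun x hx ↦ by simp only [hZ₃ x hx, eval_steinOp_toPoly, Cubic.eval_toPoly]; ring)]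
    simp only [Cubic.eval_toPoly, a, b]
    ring
  · rw [integral_gaussianReal_of_eqOn_steinOp hab
      (c₁ := 2 + 4 * τ ^ 2) (p₁ := Cubic.toPoly ⟨-1, -4 * τ, -(1 + 4 * τ ^ 2), -4 * τ⟩)
      (c₂ := 2 + 4 * ν ^ 2) (p₂ := Cubic.toPoly ⟨-1, 4 * ν, -(1 + 4 * ν ^ 2), 4 * ν⟩)
      (c₃ := 2 + 4 * τ ^ 2) (p₃ := Cubic.toPoly ⟨-1, 4 * τ, -(1 + 4 * τ ^ 2), 4 * τ⟩)
      (fun x hx ↦ by simp only [hZ₁ x hx, eval_steinOp_toPoly, Cubic.eval_toPoly]; ring)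
      (fun x hx ↦ by simp only [hZ₂ x hx, eval_steinOp_toPoly, Cubic.eval_toPoly]; ring)
      (fun x hx ↦ by simp only [hZ₃ x hx, eval_steinOp_toPoly, Cubic.eval_toPoly]; ring)]
    simp only [Cubic.eval_toPoly, a, b]
    ring
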